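/- arXiv:math/0204260 — 2 statements merged into one kernel-verified Lean document; each statement's English description precedes it below -/
import Mathlib

section
/- Let A and B be additive commutative groups, λ : A →+ B a surjective group homomorphism, e a positive integer with λ(a) = 0 implying e • a = 0 for all a, and μ : B →+ A the homomorphism with μ ∘ λ = e • id_A. Let T = {a : A | e • a = 0} be the e-torsion subgroup of A. Then the kernel of λ is contained in T, the image of T under λ equals the kernel of μ, and λ induces a group isomorphism T / (ker λ) ≅ ker μ. -/
/-- The `e`-torsion subgroup `{a : A | e • a = 0}` of an additive commutative
group `A`. -/
def nTorsion (e : ℕ) (A : Type*) [AddCommGroup A] : AddSubgroup A where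
  carrier := {a : A | e • a = 0}
  zero_mem' := by simp
  add_mem' := by
    intro a b ha hb
    simp only [Set.mem_setOf_eq, smul_add] at *
    rw [ha, hb, add_zero]
  neg_mem' := by
    intro a ha
    simp only [Set.mem_setOf_eq, smul_neg] at *
    rw [ha, neg_zero]

/-- Kernel computation in the proof of Proposition 2.2:
`ker λ ⊆ T`, `λ(T) = ker μ`, and `λ` induces an isomorphism `T / ker λ ≅ ker μ`. -/
theorem stmt2 {A B : Type*} [AddCommGroup A] [AddCommGroup B]
    (lam : A →+ B) (hsurj : Function.Surjective lam)
    (e : ℕ) (he : 0 < e) (hker : ∀ a : A, lam a = 0 → e • a = 0)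
    (μ : B →+ A) (hμlam : μ.comp lam = e • AddMonoidHom.id A) :
    lam.ker ≤ nTorsion e A ∧
      (nTorsion e A).map lam = μ.ker ∧
      ∃ φ : (nTorsion e A) ⧸ (lam.ker.addSubgroupOf (nTorsion e A)) ≃+ μ.ker,
        ∀ t : nTorsion e A, (φ (QuotientAddGroup.mk t) : B) = lam (t : A) := by
  have hμl : ∀ a : A, μ (lam a) = e • a := fun a =>
    congrArg (fun f => f a) (congrArg DFunLike.coe hμlam)
  have hTker : ∀ a : A, a ∈ nTorsion e A → lam a ∈ μ.ker := by
    intro a ha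
    have : μ (lam a) = 0 := by rw [hμl]; exact ha
    simpa [AddMonoidHom.mem_ker] using this
  -- the induced map
  let ψ : (nTorsion e A) →+ μ.ker :=
    { toFun := fun t => ⟨lam t, hTker t t.2⟩
      map_zero' := by ext; simp
      map_add' := by intro x y; ext; simp }
  have hψsurj : Function.Surjective ψ := by
    rintro ⟨b, hb⟩
    obtain ⟨a, rfl⟩ := hsurj b
    have ha : a ∈ nTorsion e A := by
      have : μ (lam a) = 0 := hb
      rw [hμl] at this
      exact this
    exact ⟨⟨a, ha⟩, rfl⟩
  have hψker : ψ.ker = lam.ker.addSubgroupOf (nTorsion e A) := by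
    ext t
    simp [ψ, AddMonoidHom.mem_ker, AddSubgroup.mem_addSubgroupOf,
      Subtype.ext_iff]
  refine ⟨fun a ha => hker a ha, ?_, ?_⟩
  · ext b
    constructor
    · rintro ⟨a, ha, rfl⟩
      exact hTker a ha
    · intro hb
      obtain ⟨a, rfl⟩ := hsurj b
      have ha : a ∈ nTorsion e A := by
        have : μ (lam a) = 0 := hb
        rw [hμl] at this
        exact this
      exact ⟨a, ha, rfl⟩
  · refine ⟨(QuotientAddGroup.quotientAddEquivOfEq hψker.symm).trans
      (QuotientAddGroup.quotientKerEquivOfSurjective ψ hψsurj), fun t => ?_⟩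
    rfl
end

section
/- Let A and B be additive commutative groups, λ : A →+ B a surjective group homomorphism, e a positive integer with λ(a) = 0 implying e • a = 0 for all a, and μ : B →+ A the homomorphism with μ ∘ λ = e • id_A. Assume the e-torsion subgroup T = {a : A | e • a = 0} is finite. Then the kernels of λ and μ are finite and |ker μ| · |ker λ| = |T|. -/
theorem stmt3' {A B : Type*} [AddCommGroup A] [AddCommGroup B]
    (lam : A →+ B) (hsurj : Function.Surjective lam)
    (e : ℕ) (he : 0 < e) (hker : ∀ a : A, lam a = 0 → e • a = 0)
    (μ : B →+ A) (hμlam : μ.comp lam = e • AddMonoidHom.id A)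
    (T : AddSubgroup A) (hTdef : ∀ a : A, a ∈ T ↔ e • a = 0)
    (hT : (T : Set A).Finite) :
    (lam.ker : Set A).Finite ∧ (μ.ker : Set B).Finite ∧
      Nat.card μ.ker * Nat.card lam.ker = Nat.card T := by
  have hμlam' : ∀ a : A, μ (lam a) = e • a := fun a =>
    congrFun (congrArg DFunLike.coe hμlam) a
  have hsub : (lam.ker : Set A) ⊆ (T : Set A) := by
    intro a ha
    exact (hTdef a).2 (hker a ha)
  have hkerfin : (lam.ker : Set A).Finite := hT.subset hsub
  set φ : T →+ B := lam.comp T.subtype with hφ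
  have hrange : φ.range = μ.ker := by
    ext b
    constructor
    · rintro ⟨⟨a, ha⟩, rfl⟩
      simp only [AddMonoidHom.mem_ker]
      rw [hφ]
      simp only [AddMonoidHom.comp_apply, AddSubgroup.coe_subtype]
      rw [hμlam']
      exact (hTdef a).1 ha
    · intro hb
      obtain ⟨a, rfl⟩ := hsurj b
      have ha : a ∈ T := (hTdef a).2 (by rw [← hμlam']; exact hb)
      exact ⟨⟨a, ha⟩, rfl⟩
  have hkerμfin : (μ.ker : Set B).Finite := by
    rw [← hrange]
    have : (φ.range : Set B) = lam '' (T : Set A) := by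
      ext b; simp [hφ, AddMonoidHom.mem_range, Set.mem_image]
    rw [this]
    exact hT.image lam
  haveI : Finite T := hT.to_subtype
  have hkerequiv : φ.ker ≃ lam.ker := by
    refine ⟨fun x => ⟨x.1.1, x.2⟩, fun a => ⟨⟨a.1, (hTdef a.1).2 (hker a.1 a.2)⟩, a.2⟩, ?_, ?_⟩
    · intro x; ext; rfl
    · intro a; ext; rfl
  refine ⟨hkerfin, hkerμfin, ?_⟩
  calc Nat.card μ.ker * Nat.card lam.ker
      = Nat.card φ.range * Nat.card φ.ker := by rw [hrange, Nat.card_congr hkerequiv]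
    _ = Nat.card (T ⧸ φ.ker) * Nat.card φ.ker := by
        rw [Nat.card_congr (QuotientAddGroup.quotientKerEquivRange φ).toEquiv]
    _ = Nat.card T := (AddSubgroup.card_eq_card_quotient_mul_card_addSubgroup φ.ker).symm


/-- Counting consequence of Proposition 2.2: if the `e`-torsion `T` is finite,
then `ker λ` and `ker μ` are finite and `|ker μ| * |ker λ| = |T|`. -/
theorem stmt3 {A B : Type*} [AddCommGroup A] [AddCommGroup B]
    (lam : A →+ B) (hsurj : Function.Surjective lam)
    (e : ℕ) (he : 0 < e) (hker : ∀ a : A, lam a = 0 → e • a = 0)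
    (μ : B →+ A) (hμlam : μ.comp lam = e • AddMonoidHom.id A)
    (hT : (nTorsion e A : Set A).Finite) :
    (lam.ker : Set A).Finite ∧ (μ.ker : Set B).Finite ∧
      Nat.card μ.ker * Nat.card lam.ker = Nat.card (nTorsion e A) := by
  exact stmt3' lam hsurj e he hker μ hμlam (nTorsion e A) (fun a => Iff.rfl) hT
end
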